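/- arXiv:1403.7272 — 3 statements merged into one kernel-verified Lean document; each statement's English description precedes it below -/
import Mathlib

section
/- (Hakimi's orientation theorem) Let H=(V,F) be a finite undirected graph and let m(v) be a non-negative integer for every v ∈ V. Then H has an orientation such that the in-degree ρ(v) equals m(v) for all v ∈ V if and only if both: (i) |F| = Σ_{v∈V} m(v), and (ii) |F(X)| ≤ Σ_{v∈X} m(v) for all X ⊆ V, where F(X) denotes the set of edges in F joining two vertices of X. -/
/-!
Common set-up: a finite simple undirected graph on vertex type `V` is given by a
finset `F` of undirected edges (`Sym2 V`), all non-loops.  An orientation is a map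
`o : Sym2 V → V × V` with `Sym2.mk (o e) = e` for every `e ∈ F`.
-/

variable {V : Type*}

/-- The set of vertices incident to at least one edge of `F'`. -/
def edgeSupp [Fintype V] [DecidableEq V] (F' : Finset (Sym2 V)) : Finset V :=
  Finset.univ.filter (fun v => ∃ e ∈ F', v ∈ e)

/-- `(k,ℓ)`-sparsity: every edge subset `F'` satisfies `|F'| ≤ max (k|V(F')| - ℓ) 0`. -/
def Sparse [Fintype V] [DecidableEq V] (k l : ℤ) (F : Finset (Sym2 V)) : Prop :=
  ∀ F' ⊆ F, (F'.card : ℤ) ≤ max (k * (edgeSupp F').card - l) 0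

/-- `(k,ℓ)`-tightness: `(k,ℓ)`-sparse and `|F| = max (k|V| - ℓ) 0`. -/
def Tight [Fintype V] [DecidableEq V] (k l : ℤ) (F : Finset (Sym2 V)) : Prop :=
  Sparse k l F ∧ (F.card : ℤ) = max (k * (Fintype.card V) - l) 0

/-- In-degree of `v` under the orientation `o` of the edge set `F`. -/
def inDeg [DecidableEq V] (F : Finset (Sym2 V)) (o : Sym2 V → V × V) (v : V) : ℕ :=
  (F.filter (fun e => (o e).2 = v)).card

/-- `F(X)`: the edges of `F` joining two vertices of `X`. -/
def edgesWithin [Fintype V] [DecidableEq V] (F : Finset (Sym2 V)) (X : Finset V) :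
    Finset (Sym2 V) :=
  F.filter (fun e => ∀ v : V, v ∈ e → v ∈ X)

/-- The (undirected) edges of `F` whose directed version under `o` enters `X`
from `V \ X`, i.e. those `e ∈ F` with `(o e).1 ∉ X` and `(o e).2 ∈ X`. -/
def entering [DecidableEq V] (F : Finset (Sym2 V)) (o : Sym2 V → V × V) (X : Finset V) :
    Finset (Sym2 V) :=
  F.filter (fun e => (o e).1 ∉ X ∧ (o e).2 ∈ X)
/-!
Necessity: counting the edges of `F`, or of `F(X)`, by their heads gives `|F| = ∑ ρ(v)` and
`|F(X)| ≤ ∑_{v ∈ X} ρ(v)`.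

Sufficiency, by induction on `|F|`: call `X` tight if `|F(X)| = ∑_{v ∈ X} m(v)`. The function
`X ↦ |F(X)|` is supermodular, strictly so on a pair `X, Y` separated by an edge `ab` with
`a ∈ X \ Y`, `b ∈ Y \ X`; by (ii) two such sets cannot both be tight. Hence one endpoint `v` of
`ab` lies in no tight set avoiding the other endpoint `w`. Orienting `ab` towards `v`, deleting it
and lowering `m(v)` by one preserves (i) and (ii), and the induction hypothesis orients the rest.
-/

open Finset Function

variable [DecidableEq V] {X Y : Finset V} {m : V → ℕ} {a b v w : V}

lemma sum_update_sub_one_add_one (hv : 0 < m v) (hX : v ∈ X) :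
    ∑ x ∈ X, update m v (m v - 1) x + 1 = ∑ x ∈ X, m x := by
  rw [sum_update_of_mem hX, ← add_sum_erase _ _ hX, sdiff_singleton_eq_erase]
  omega

lemma inDeg_update_of_mem {F : Finset (Sym2 V)} {e : Sym2 V} (he : e ∈ F)
    (o : Sym2 V → V × V) (p : V × V) (u : V) :
    inDeg F (update o e p) u = inDeg (F.erase e) o u + if p.2 = u then 1 else 0 := by
  simp only [inDeg, card_filter]
  rw [← add_sum_erase _ _ he, update_self, add_comm]
  congr 1
  exact sum_congr rfl fun f hf => by rw [update_of_ne (ne_of_mem_erase hf)]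

variable [Fintype V] {F : Finset (Sym2 V)}

lemma card_eq_sum_inDeg (o : Sym2 V → V × V) : #F = ∑ v, inDeg F o v :=
  card_eq_sum_card_fiberwise fun _ _ => mem_univ _

lemma card_edgesWithin_le_sum_inDeg {o : Sym2 V → V × V}
    (ho : ∀ e ∈ F, s((o e).1, (o e).2) = e) (X : Finset V) :
    #(edgesWithin F X) ≤ ∑ v ∈ X, inDeg F o v := by
  have hhead : ∀ e ∈ edgesWithin F X, (o e).2 ∈ X := fun e he => by
    simp only [edgesWithin, mem_filter] at he
    exact he.2 _ (by simpa only [ho e he.1] using Sym2.mem_mk_right (o e).1 (o e).2)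
  rw [card_eq_sum_card_fiberwise hhead]
  exact sum_le_sum fun v _ => card_le_card (filter_subset_filter _ (filter_subset _ _))

lemma mk_mem_edgesWithin : s(a, b) ∈ edgesWithin F X ↔ s(a, b) ∈ F ∧ a ∈ X ∧ b ∈ X := by
  simp [edgesWithin]

lemma edgesWithin_inter : edgesWithin F (X ∩ Y) = edgesWithin F X ∩ edgesWithin F Y := by
  ext e
  simp only [edgesWithin, mem_filter, mem_inter]
  grind

lemma edgesWithin_union_subset :
    edgesWithin F X ∪ edgesWithin F Y ⊆ edgesWithin F (X ∪ Y) := by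
  intro e
  simp only [edgesWithin, mem_filter, mem_union]
  grind

lemma edgesWithin_erase (e : Sym2 V) :
    edgesWithin (F.erase e) X = (edgesWithin F X).erase e :=
  filter_erase _ _ _

lemma card_edgesWithin_add_lt_union_add_inter (he : s(a, b) ∈ F) (haX : a ∈ X) (hbX : b ∉ X)
    (hbY : b ∈ Y) (haY : a ∉ Y) :
    #(edgesWithin F X) + #(edgesWithin F Y) <
      #(edgesWithin F (X ∪ Y)) + #(edgesWithin F (X ∩ Y)) := by
  have hcross : s(a, b) ∉ edgesWithin F X ∪ edgesWithin F Y := by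
    simp [mk_mem_edgesWithin, hbX, haY]
  have hunion : insert s(a, b) (edgesWithin F X ∪ edgesWithin F Y) ⊆ edgesWithin F (X ∪ Y) :=
    insert_subset (mk_mem_edgesWithin.2 ⟨he, mem_union_left _ haX, mem_union_right _ hbY⟩)
      edgesWithin_union_subset
  have := card_le_card hunion
  rw [card_insert_of_notMem hcross] at this
  rw [edgesWithin_inter, ← card_union_add_card_inter]
  omega

lemma exists_endpoint_forall_card_edgesWithin_lt
    (hm : ∀ X : Finset V, #(edgesWithin F X) ≤ ∑ x ∈ X, m x)
    {e : Sym2 V} (he : e ∈ F) :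
    ∃ v w, s(v, w) = e ∧
      ∀ X : Finset V, v ∈ X → w ∉ X → #(edgesWithin F X) < ∑ x ∈ X, m x := by
  induction e using Sym2.ind with | _ a b =>
  by_cases ha : ∀ X : Finset V, a ∈ X → b ∉ X → #(edgesWithin F X) < ∑ x ∈ X, m x
  · exact ⟨a, b, rfl, ha⟩
  push Not at ha
  obtain ⟨X, haX, hbX, hX⟩ := ha
  refine ⟨b, a, Sym2.eq_swap, fun Y hbY haY => ?_⟩
  have := card_edgesWithin_add_lt_union_add_inter he haX hbX hbY haY
  have := hm (X ∪ Y)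
  have := hm (X ∩ Y)
  have := sum_union_inter (s₁ := X) (s₂ := Y) (f := m)
  omega

lemma pos_of_forall_card_edgesWithin_lt
    (hm : ∀ X : Finset V, #(edgesWithin F X) ≤ ∑ x ∈ X, m x) (he : s(v, w) ∈ F)
    (hlt : ∀ X : Finset V, v ∈ X → w ∉ X → #(edgesWithin F X) < ∑ x ∈ X, m x) :
    0 < m v := by
  by_cases hwv : w = v
  · subst hwv
    have hloop : s(w, w) ∈ edgesWithin F {w} := mk_mem_edgesWithin.2 ⟨he, by simp, by simp⟩
    simpa using (card_pos.2 ⟨_, hloop⟩).trans_le (hm {w})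
  · simpa using (hlt {v} (mem_singleton_self v) (by simpa using hwv)).trans_le' (Nat.zero_le _)

lemma card_edgesWithin_erase_le (hm : ∀ X : Finset V, #(edgesWithin F X) ≤ ∑ x ∈ X, m x)
    (he : s(v, w) ∈ F) (hv : 0 < m v)
    (hlt : ∀ X : Finset V, v ∈ X → w ∉ X → #(edgesWithin F X) < ∑ x ∈ X, m x) (X : Finset V) :
    #(edgesWithin (F.erase s(v, w)) X) ≤ ∑ x ∈ X, update m v (m v - 1) x := by
  rw [edgesWithin_erase]
  by_cases hvX : v ∈ X
  · have hsum := sum_update_sub_one_add_one hv hvX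
    by_cases hvw : s(v, w) ∈ edgesWithin F X
    · have := card_erase_add_one hvw
      have := hm X
      omega
    · have hwX : w ∉ X := fun hwX => hvw (mk_mem_edgesWithin.2 ⟨he, hvX, hwX⟩)
      rw [erase_eq_of_notMem hvw]
      have := hlt X hvX hwX
      omega
  · rw [sum_update_of_notMem hvX]
    exact card_erase_le.trans (hm X)

theorem exists_orientation_of_card_edgesWithin_le (F : Finset (Sym2 V)) (m : V → ℕ)
    (hcard : #F = ∑ v, m v) (hm : ∀ X : Finset V, #(edgesWithin F X) ≤ ∑ x ∈ X, m x) :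
    ∃ o : Sym2 V → V × V, (∀ e ∈ F, s((o e).1, (o e).2) = e) ∧ ∀ v, inDeg F o v = m v := by
  induction F using Finset.strongInduction generalizing m with | H F ih =>
  obtain rfl | ⟨e, he⟩ := F.eq_empty_or_nonempty
  · refine ⟨fun e => e.out, by simp, fun v => ?_⟩
    simp [inDeg, sum_eq_zero_iff.1 hcard.symm v (mem_univ v)]
  obtain ⟨v, w, rfl, hlt⟩ := exists_endpoint_forall_card_edgesWithin_lt hm he
  have hv := pos_of_forall_card_edgesWithin_lt hm he hlt
  have hcard' : #(F.erase s(v, w)) = ∑ x, update m v (m v - 1) x := by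
    have := card_erase_add_one he
    have := sum_update_sub_one_add_one hv (mem_univ v)
    omega
  obtain ⟨o, ho, hdeg⟩ :=
    ih _ (erase_ssubset he) _ hcard' (card_edgesWithin_erase_le hm he hv hlt)
  refine ⟨update o s(v, w) (w, v), fun f hf => ?_, fun u => ?_⟩
  · rcases eq_or_ne f s(v, w) with rfl | hne
    · simp [Sym2.eq_swap]
    · rw [update_of_ne hne]
      exact ho f (mem_erase.2 ⟨hne, hf⟩)
  · rw [inDeg_update_of_mem he, hdeg]
    rcases eq_or_ne v u with rfl | hne
    · simp only [update_self, if_true]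
      omega
    · simp [hne, update_of_ne hne.symm]

theorem hakimi_orientation_general {V : Type*} [Fintype V] [DecidableEq V]
    (F : Finset (Sym2 V)) (m : V → ℕ) :
    (∃ o : Sym2 V → V × V, (∀ e ∈ F, Sym2.mk (o e).1 (o e).2 = e) ∧ ∀ v : V, inDeg F o v = m v) ↔
      (F.card = ∑ v : V, m v ∧ ∀ X : Finset V, (edgesWithin F X).card ≤ ∑ v ∈ X, m v) := by
  constructor
  · rintro ⟨o, ho, hdeg⟩
    obtain rfl : inDeg F o = m := funext hdeg
    exact ⟨card_eq_sum_inDeg o, card_edgesWithin_le_sum_inDeg ho⟩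
  · rintro ⟨hcard, hm⟩
    exact exists_orientation_of_card_edgesWithin_le F m hcard hm

/-- **Hakimi's orientation theorem.**  A finite simple graph `H = (V, F)` has an
orientation with in-degree exactly `m v` at every vertex `v` if and only if
`|F| = ∑ v, m v` and `|F(X)| ≤ ∑ v ∈ X, m v` for every `X ⊆ V`. -/
theorem hakimi_orientation {V : Type*} [Fintype V] [DecidableEq V]
    (F : Finset (Sym2 V)) (hSimple : ∀ e ∈ F, ¬ e.IsDiag) (m : V → ℕ) :
    (∃ o : Sym2 V → V × V, (∀ e ∈ F, Sym2.mk (o e).1 (o e).2 = e) ∧ ∀ v : V, inDeg F o v = m v) ↔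
      (F.card = ∑ v : V, m v ∧ ∀ X : Finset V, (edgesWithin F X).card ≤ ∑ v ∈ X, m v) :=
  hakimi_orientation_general F m
end

section
/- Let k, ℓ be integers with 0 ≤ ℓ ≤ k, let H=(V,F) be a (k,ℓ)-tight graph with |V| ≥ 2, and let x ∈ V be an arbitrary vertex of H. Then H has an orientation such that the in-degree of x is k−ℓ and the in-degree of every vertex z ∈ V∖{x} is k. -/
/-!
Common set-up: a finite simple undirected graph on vertex type `V` is given by a
finset `F` of undirected edges (`Sym2 V`), all non-loops.  An orientation is a map
`o : Sym2 V → V × V` with `Sym2.mk (o e) = e` for every `e ∈ F`.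
-/

variable {V : Type*}

/-!
Let `t v = k - ℓ` for `v = x` and `t v = k` otherwise. By Hall's theorem (this is Hakimi's
orientation theorem), an orientation with `ρ ≤ t` exists as soon as every nonempty edge set `S`
satisfies `|S| ≤ ∑_{v ∈ V(S)} t v`, and `(k,ℓ)`-sparsity gives `|S| ≤ k|V(S)| - ℓ`, which is at
most that sum. Tightness then forces `∑ t = k|V| - ℓ ≤ |F| = ∑ ρ`, so every bound `ρ v ≤ t v` is
attained.
-/

open Finset

lemma sum_ite_eq_mul_card_sub [DecidableEq V] (A : Finset V) (x : V) (k l : ℤ) :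
    ∑ v ∈ A, (if v = x then k - l else k) = k * #A - if x ∈ A then l else 0 := by
  have hsplit (v : V) : (if v = x then k - l else k) = k - if v = x then l else 0 := by
    split_ifs <;> ring
  simp only [hsplit, sum_sub_distrib, sum_const, sum_ite_eq', nsmul_eq_mul, mul_comm]

section Orientation

variable [Fintype V] [DecidableEq V]

lemma card_filter_fst_mem_sigma (c : V → ℕ) (A : Finset V) :
    #(univ.filter fun p : Σ v, Fin (c v) => p.1 ∈ A) = ∑ v ∈ A, c v := by
  rw [show (univ.filter fun p : Σ v, Fin (c v) => p.1 ∈ A) = A.sigma fun _ => univ by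
    ext; simp, card_sigma]
  simp

lemma sum_inDeg (F : Finset (Sym2 V)) (o : Sym2 V → V × V) :
    ∑ v, inDeg F o v = #F :=
  (card_eq_sum_card_fiberwise fun e _ => mem_univ (o e).2).symm

theorem exists_orientation_inDeg_le (F : Finset (Sym2 V)) (c : V → ℕ)
    (hF : ∀ S ⊆ F, #S ≤ ∑ v ∈ edgeSupp S, c v) :
    ∃ o : Sym2 V → V × V, (∀ e ∈ F, Sym2.mk (o e).1 (o e).2 = e) ∧ ∀ v, inDeg F o v ≤ c v := by
  -- Hakimi's theorem via Hall: match each edge to one of the `c v` slots of one of its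
  -- endpoints `v`, which becomes its head.
  let slots : F → Finset (Σ v, Fin (c v)) := fun e => univ.filter fun p => p.1 ∈ e.1
  have hall : ∀ s : Finset F, #s ≤ #(s.biUnion slots) := by
    intro s
    have hsupp : s.biUnion slots = univ.filter fun p => p.1 ∈ edgeSupp (s.map (.subtype _)) := by
      ext; simp [slots, edgeSupp]
    rw [hsupp, card_filter_fst_mem_sigma, ← card_map (.subtype _)]
    exact hF _ fun e he => by obtain ⟨e, -, rfl⟩ := mem_map.1 he; exact e.2
  obtain ⟨f, hf_inj, hf_mem⟩ := (all_card_le_biUnion_card_iff_exists_injective slots).1 hall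
  have hhead (e : F) : (f e).1 ∈ e.1 := (mem_filter.1 (hf_mem e)).2
  let o : Sym2 V → V × V := fun e =>
    if he : e ∈ F then (Sym2.Mem.other (hhead ⟨e, he⟩), (f ⟨e, he⟩).1) else e.out
  have ho (e) (he : e ∈ F) : o e = (Sym2.Mem.other (hhead ⟨e, he⟩), (f ⟨e, he⟩).1) := dif_pos he
  refine ⟨o, fun e he => ?_, fun v => ?_⟩
  · rw [ho e he, Sym2.eq_swap]
    exact Sym2.other_spec _
  · rw [inDeg, ← card_attach, ← sum_singleton c v, ← card_filter_fst_mem_sigma c {v}]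
    refine card_le_card_of_injOn (fun e => f ⟨e.1, (mem_filter.1 e.2).1⟩) (fun e _ => ?_)
      (fun e _ e' _ h => Subtype.ext (by simpa using hf_inj h))
    have := (mem_filter.1 e.2).2
    rw [ho _ (mem_filter.1 e.2).1] at this
    simpa using this

lemma Sparse.card_le_of_nonempty {k l : ℤ} {F S : Finset (Sym2 V)} (hF : Sparse k l F)
    (hSF : S ⊆ F) (hS : S.Nonempty) : (#S : ℤ) ≤ k * #(edgeSupp S) - l := by
  have := hF S hSF
  have : (0 : ℤ) < #S := by exact_mod_cast hS.card_pos
  omega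

end Orientation

theorem orientation_of_tight_of_le_general {V : Type*} [Fintype V] [DecidableEq V]
    (k l : ℤ) (hl0 : 0 ≤ l) (hlk : l ≤ k)
    (F : Finset (Sym2 V)) (hTight : Tight k l F) (x : V) :
    ∃ o : Sym2 V → V × V, (∀ e ∈ F, Sym2.mk (o e).1 (o e).2 = e) ∧
      (inDeg F o x : ℤ) = k - l ∧ ∀ z : V, z ≠ x → (inDeg F o z : ℤ) = k := by
  set t : V → ℤ := fun v => if v = x then k - l else k
  have ht_nonneg (v : V) : 0 ≤ t v := by
    show 0 ≤ if v = x then k - l else k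
    split_ifs <;> omega
  obtain ⟨o, ho, hle⟩ := exists_orientation_inDeg_le F (fun v => (t v).toNat) fun S hSF => by
    rcases S.eq_empty_or_nonempty with rfl | hS
    · simp
    zify
    simp only [Int.toNat_of_nonneg (ht_nonneg _)]
    calc (#S : ℤ) ≤ k * #(edgeSupp S) - l := hTight.1.card_le_of_nonempty hSF hS
      _ ≤ ∑ v ∈ edgeSupp S, t v := by rw [sum_ite_eq_mul_card_sub]; split_ifs <;> omega
  have hle_t (v : V) : (inDeg F o v : ℤ) ≤ t v := by have := hle v; have := ht_nonneg v; omega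
  have hsum : ∑ v, t v ≤ ∑ v, (inDeg F o v : ℤ) := by
    rw [sum_ite_eq_mul_card_sub, if_pos (mem_univ x), ← Nat.cast_sum, sum_inDeg, hTight.2, card_univ]
    exact le_max_left _ _
  have heq := (sum_eq_sum_iff_of_le fun v _ => hle_t v).1
    (le_antisymm (sum_le_sum fun v _ => hle_t v) hsum)
  exact ⟨o, ho, by simpa [t] using heq x (mem_univ x),
    fun z hz => by simpa [t, hz] using heq z (mem_univ z)⟩

/-- If `0 ≤ ℓ ≤ k` and `H = (V, F)` is `(k,ℓ)`-tight with `|V| ≥ 2`, then for any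
vertex `x` there is an orientation with `ρ(x) = k - ℓ` and `ρ(z) = k` for `z ≠ x`. -/
theorem orientation_of_tight_of_le {V : Type*} [Fintype V] [DecidableEq V]
    (k l : ℤ) (hl0 : 0 ≤ l) (hlk : l ≤ k)
    (F : Finset (Sym2 V)) (hSimple : ∀ e ∈ F, ¬ e.IsDiag) (hTight : Tight k l F)
    (hV : 2 ≤ Fintype.card V) (x : V) :
    ∃ o : Sym2 V → V × V, (∀ e ∈ F, Sym2.mk (o e).1 (o e).2 = e) ∧
      (inDeg F o x : ℤ) = k - l ∧ ∀ z : V, z ≠ x → (inDeg F o z : ℤ) = k :=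
  orientation_of_tight_of_le_general k l hl0 hlk F hTight x
end

section
/- Let k, ℓ be integers with 0 ≤ k ≤ ℓ ≤ 2k−1, let H=(V,F) be a (k,ℓ)-tight graph with |V| ≥ 2, and let x, y ∈ V be distinct. Set m(x) = 0, m(y) = 2k−ℓ, and m(z) = k for all z ∈ V∖{x,y}. Then Σ_{v∈V} m(v) = |F|, and for every X ⊆ V, |F(X)| ≤ Σ_{v∈X} m(v), where F(X) denotes the set of edges of F joining two vertices of X. -/
/-!
Common set-up: a finite simple undirected graph on vertex type `V` is given by a
finset `F` of undirected edges (`Sym2 V`), all non-loops.  An orientation is a map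
`o : Sym2 V → V × V` with `Sym2.mk (o e) = e` for every `e ∈ F`.
-/

variable {V : Type*}

/-!
Vertex `x` gets weight `0`, vertex `y` weight `2k - ℓ` and every other vertex weight `k`, so any
vertex set `S` has weight at least `k|S| - ℓ` (using `0 ≤ k ≤ ℓ`), with equality for `S = V`.
Since `F(X)` is supported inside `X`, sparsity bounds `|F(X)|` by `max (k|X| - ℓ) 0`, which the
nonnegative weights of `X` dominate; tightness and `k|V| - ℓ ≥ 2k - ℓ > 0` give the total.
-/

open Finset

theorem edgeSupp_edgesWithin_subset [Fintype V] [DecidableEq V] (F : Finset (Sym2 V))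
    (X : Finset V) : edgeSupp (edgesWithin F X) ⊆ X := by
  intro v hv
  obtain ⟨e, he, hve⟩ := (mem_filter.1 hv).2
  exact (mem_filter.1 he).2 v hve

theorem Sparse.card_edgesWithin_le [Fintype V] [DecidableEq V] {k l : ℤ} {F : Finset (Sym2 V)}
    (hF : Sparse k l F) {w : V → ℤ} (hw : ∀ v, 0 ≤ w v)
    (hwS : ∀ S : Finset V, k * #S - l ≤ ∑ v ∈ S, w v) (X : Finset V) :
    ((edgesWithin F X).card : ℤ) ≤ ∑ v ∈ X, w v := by
  have hmono : ∑ v ∈ edgeSupp (edgesWithin F X), w v ≤ ∑ v ∈ X, w v :=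
    sum_le_sum_of_subset_of_nonneg (edgeSupp_edgesWithin_subset F X) fun v _ _ => hw v
  calc ((edgesWithin F X).card : ℤ)
      ≤ max (k * #(edgeSupp (edgesWithin F X)) - l) 0 := hF _ (filter_subset _ _)
    _ ≤ ∑ v ∈ X, w v := max_le ((hwS _).trans hmono) (sum_nonneg fun v _ => hw v)

section PinnedWeight

variable [DecidableEq V] (k l : ℤ) (x y : V)

def pinnedWeight (v : V) : ℤ :=
  if v = x then 0 else if v = y then 2 * k - l else k

variable {k l x y}

theorem pinnedWeight_nonneg (hk0 : 0 ≤ k) (hl2k : l ≤ 2 * k) (v : V) :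
    0 ≤ pinnedWeight k l x y v := by
  unfold pinnedWeight
  split_ifs <;> omega

theorem sum_pinnedWeight (hxy : x ≠ y) (S : Finset V) :
    ∑ v ∈ S, pinnedWeight k l x y v =
      k * #S - (if x ∈ S then k else 0) - (if y ∈ S then l - k else 0) := by
  have hpoint : ∀ v, pinnedWeight k l x y v =
      k - (if v = x then k else 0) - (if v = y then l - k else 0) := by
    intro v
    unfold pinnedWeight
    split_ifs <;> simp_all
    ring
  simp only [hpoint, sum_sub_distrib, sum_const, nsmul_eq_mul, sum_ite_eq']
  ring

theorem sub_le_sum_pinnedWeight (hk0 : 0 ≤ k) (hkl : k ≤ l) (hxy : x ≠ y) (S : Finset V) :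
    k * #S - l ≤ ∑ v ∈ S, pinnedWeight k l x y v := by
  rw [sum_pinnedWeight hxy]
  split_ifs <;> linarith

end PinnedWeight

theorem hakimi_condition_of_ge_general {V : Type*} [Fintype V] [DecidableEq V]
    (k l : ℤ) (hk0 : 0 ≤ k) (hkl : k ≤ l) (hl2k : l ≤ 2 * k - 1)
    (F : Finset (Sym2 V)) (hTight : Tight k l F)
    (hV : 2 ≤ Fintype.card V) (x y : V) (hxy : x ≠ y) :
    (∑ v : V, (if v = x then 0 else if v = y then 2 * k - l else k)) = (F.card : ℤ) ∧
      ∀ X : Finset V,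
        ((edgesWithin F X).card : ℤ) ≤
          ∑ v ∈ X, (if v = x then 0 else if v = y then 2 * k - l else k) := by
  obtain ⟨hSparse, hCard⟩ := hTight
  refine ⟨?_, hSparse.card_edgesWithin_le (pinnedWeight_nonneg hk0 (by omega))
    (sub_le_sum_pinnedWeight hk0 hkl hxy)⟩
  have hpos : l ≤ k * Fintype.card V := by
    have : (2 : ℤ) ≤ Fintype.card V := by exact_mod_cast hV
    nlinarith
  change ∑ v, pinnedWeight k l x y v = _
  rw [sum_pinnedWeight hxy, hCard, max_eq_left (by omega), card_univ]
  simp only [mem_univ, if_true]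
  ring

/-- Feasibility of Step 2 of Protocol B: for `0 ≤ k ≤ ℓ ≤ 2k - 1`, a `(k,ℓ)`-tight
graph with `|V| ≥ 2`, and `m(x) = 0`, `m(y) = 2k - ℓ`, `m(z) = k` otherwise, Hakimi's
condition holds: `∑ v, m v = |F|` and `|F(X)| ≤ ∑ v ∈ X, m v` for every `X ⊆ V`. -/
theorem hakimi_condition_of_ge {V : Type*} [Fintype V] [DecidableEq V]
    (k l : ℤ) (hk0 : 0 ≤ k) (hkl : k ≤ l) (hl2k : l ≤ 2 * k - 1)
    (F : Finset (Sym2 V)) (hSimple : ∀ e ∈ F, ¬ e.IsDiag) (hTight : Tight k l F)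
    (hV : 2 ≤ Fintype.card V) (x y : V) (hxy : x ≠ y) :
    (∑ v : V, (if v = x then 0 else if v = y then 2 * k - l else k)) = (F.card : ℤ) ∧
      ∀ X : Finset V,
        ((edgesWithin F X).card : ℤ) ≤
          ∑ v ∈ X, (if v = x then 0 else if v = y then 2 * k - l else k) :=
  hakimi_condition_of_ge_general k l hk0 hkl hl2k F hTight hV x y hxy
end
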